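/- Let k₁₁, k₁₂, k₂₂, k₃₁, k₃₃ ∈ ℝ with k₃₃ > 0 or k₁₁ + k₂₂ > 0, and let A₅ be the real 3×3 matrix with rows (k₁₁, k₁₂, 0), (k₁₂, k₂₂, 0), (k₃₁, 0, k₃₃). Then A₅ has a real eigenvalue λ > 0, i.e. there exists λ > 0 with det(A₅ − λ·I) = 0. -/

import Mathlib

/-! The matrix is block lower triangular, so its characteristic polynomial factors as
`(k₃₃ - l)` times that of the symmetric block `!![k₁₁, k₁₂; k₁₂, k₂₂]`. If `k₃₃ > 0` it is
itself a positive eigenvalue; otherwise the larger eigenvalue of the symmetric block is real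
and at least half its trace, hence positive when `k₁₁ + k₂₂ > 0`. -/

namespace Matrix

variable {R : Type*}

theorem fin_three_sub_smul_one [Ring R] (a b c d e f g h i l : R) :
    !![a, b, c; d, e, f; g, h, i] - l • (1 : Matrix (Fin 3) (Fin 3) R)
      = !![a - l, b, c; d, e - l, f; g, h, i - l] := by
  ext i j
  fin_cases i <;> fin_cases j <;> simp

theorem det_fin_three_block_lower [CommRing R] (a b c d e f : R) :
    (!![a, b, 0; c, d, 0; e, 0, f]).det = f * (a * d - b * c) := by
  simp [det_fin_three]
  ring

end Matrix

theorem exists_half_trace_le_root_of_symm (a b d : ℝ) :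
    ∃ l : ℝ, (a + d) / 2 ≤ l ∧ (a - l) * (d - l) - b * b = 0 := by
  obtain ⟨s, hs_nonneg, hs_sq⟩ : ∃ s : ℝ, 0 ≤ s ∧ s ^ 2 = (a - d) ^ 2 + 4 * b ^ 2 :=
    ⟨_, Real.sqrt_nonneg _, Real.sq_sqrt (by positivity)⟩
  exact ⟨(a + d + s) / 2, by linarith, by linear_combination hs_sq / 4⟩

/-- The instability assertion of Theorem 5.5: if `k₃₃ > 0` or `k₁₁ + k₂₂ > 0`, then the
linearization matrix `A₅` of system (1.1) at `E₅(x̄₁, x̄₂, 0)` has a positive real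
eigenvalue. -/
theorem A5_has_pos_eigenvalue (k₁₁ k₁₂ k₂₂ k₃₁ k₃₃ : ℝ)
    (h : 0 < k₃₃ ∨ 0 < k₁₁ + k₂₂) :
    ∃ l : ℝ, 0 < l ∧
      ((!![k₁₁, k₁₂, 0; k₁₂, k₂₂, 0; k₃₁, 0, k₃₃] : Matrix (Fin 3) (Fin 3) ℝ)
          - l • (1 : Matrix (Fin 3) (Fin 3) ℝ)).det = 0 := by
  have charpoly (l : ℝ) :
      ((!![k₁₁, k₁₂, 0; k₁₂, k₂₂, 0; k₃₁, 0, k₃₃] : Matrix (Fin 3) (Fin 3) ℝ)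
          - l • (1 : Matrix (Fin 3) (Fin 3) ℝ)).det
        = (k₃₃ - l) * ((k₁₁ - l) * (k₂₂ - l) - k₁₂ * k₁₂) := by
    rw [Matrix.fin_three_sub_smul_one, Matrix.det_fin_three_block_lower]
  rcases h with hk₃₃ | htrace
  · exact ⟨k₃₃, hk₃₃, by rw [charpoly, sub_self, zero_mul]⟩
  · obtain ⟨l, hl, hroot⟩ := exists_half_trace_le_root_of_symm k₁₁ k₁₂ k₂₂
    exact ⟨l, by linarith, by rw [charpoly, hroot, mul_zero]⟩
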